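/- Fix finite sets W, Z, distributions μ, μ' on Z, a loss ℓ, an auxiliary loss ℓ̃, and n ≥ 1. Let v_n = E_{S'∼μ'^{⊗n}}[min_w (1/n)Σ_i ℓ̃(w, Z'_i)]. Define D₁(r) = sup over kernels P_{W'|S'} with I(W';S') ≤ r of E[L_μ(W') − (1/n)Σ_i ℓ(W',Z'_i)], and D̃₂(ρ) = max over P_{Ŵ|Z̃} with Z̃ ∼ μ', I(Ŵ;Z̃) ≤ ρ, and E[ℓ̃(Ŵ,Z̃)] ≥ v_n of E[L_μ(Ŵ) − ℓ(Ŵ,Z̃)]. Then D₁(r) ≤ D̃₂(r/n) ≤ D₂(r/n), where D₂ is defined like D̃₂ but without the auxiliary-loss constraint. -/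

import Mathlib

/-!
Time-sharing: from a kernel `q` for `W'` given `S' = (Z'₁, …, Z'ₙ)`, average the joint laws of
`(W', Z'ᵢ)` over `i`. The average has `Z`-marginal `μ'`, turns the empirical risk into the
single-letter risk, and its auxiliary risk is the empirical `ℓ̃`-risk of `W'`, hence at least the
ERM value `vₙ`. Its mutual information is at most `r / n`: all the `(W', Z'ᵢ)` share the same
marginals, so the average has information at most the average of the `I(W'; Z'ᵢ)` by convexity of
`t ↦ t log (t / c)`, and since the coordinates of `S'` are independent, `∑ᵢ I(W'; Z'ᵢ) ≤ I(W'; S')`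
by Gibbs' inequality against the law under which the `Z'ᵢ` are conditionally independent given
`W'`.
-/

noncomputable def mutInfo {A B : Type*} [Fintype A] [Fintype B]
    (p : A × B → ℝ) : ℝ :=
  ∑ x : A × B,
    p x * Real.log (p x / ((∑ b, p (x.1, b)) * ∑ a, p (a, x.2)))

variable {W Z : Type*} [Fintype W] [Nonempty W] [Fintype Z]

/-- The expected ERM value of the auxiliary loss ℓ̃ over S' ∼ μ'^{⊗n}. -/
noncomputable def vN (n : ℕ) (μ' : Z → ℝ) (ℓt : W → Z → ℝ) : ℝ :=
  ∑ s : Fin n → Z, (∏ i, μ' (s i)) *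
    ⨅ w : W, (1 / (n : ℝ)) * ∑ i, ℓt w (s i)

/-- D₁(r): the sharpest generalization bound over kernels with I(W';S') ≤ r. -/
noncomputable def D1 (n : ℕ) (μ μ' : Z → ℝ) (ℓ : W → Z → ℝ) (r : ℝ) : ℝ :=
  sSup {g : ℝ | ∃ q : W × (Fin n → Z) → ℝ, (∀ x, 0 ≤ q x) ∧
    (∑ x, q x = 1) ∧ (∀ s : Fin n → Z, (∑ w, q (w, s)) = ∏ i, μ' (s i)) ∧
    mutInfo q ≤ r ∧
    g = ∑ x : W × (Fin n → Z), q x *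
      ((∑ z, μ z * ℓ x.1 z) - (1 / (n : ℝ)) * ∑ i, ℓ x.1 (x.2 i))}

/-- D̃₂(ρ): single-letter bound with the auxiliary-loss constraint
E[ℓ̃(Ŵ,Z̃)] ≥ vₙ. -/
noncomputable def D2tilde (n : ℕ) (μ μ' : Z → ℝ) (ℓ ℓt : W → Z → ℝ)
    (ρ : ℝ) : ℝ :=
  sSup {g : ℝ | ∃ p : W × Z → ℝ, (∀ x, 0 ≤ p x) ∧ (∑ x, p x = 1) ∧
    (∀ z, (∑ w, p (w, z)) = μ' z) ∧ mutInfo p ≤ ρ ∧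
    (∑ x : W × Z, p x * ℓt x.1 x.2) ≥ vN n μ' ℓt ∧
    g = ∑ x : W × Z, p x * ((∑ z, μ z * ℓ x.1 z) - ℓ x.1 x.2)}

/-- D₂(ρ): single-letter bound without the auxiliary-loss constraint. -/
noncomputable def D2 (μ μ' : Z → ℝ) (ℓ : W → Z → ℝ) (ρ : ℝ) : ℝ :=
  sSup {g : ℝ | ∃ p : W × Z → ℝ, (∀ x, 0 ≤ p x) ∧ (∑ x, p x = 1) ∧
    (∀ z, (∑ w, p (w, z)) = μ' z) ∧ mutInfo p ≤ ρ ∧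
    g = ∑ x : W × Z, p x * ((∑ z, μ z * ℓ x.1 z) - ℓ x.1 x.2)}

open Finset Real

lemma sub_le_mul_log_div {a b : ℝ} (ha : 0 ≤ a) (hb : 0 ≤ b) (hab : a ≠ 0 → b ≠ 0) :
    a - b ≤ a * log (a / b) := by
  rcases ha.eq_or_lt with rfl | ha
  · simpa using hb
  have hb : 0 < b := hb.lt_of_ne' (hab ha.ne')
  have hlog := one_sub_inv_le_log_of_pos (div_pos ha hb)
  calc a - b = a * (1 - (a / b)⁻¹) := by field_simp
    _ ≤ a * log (a / b) := by gcongr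

lemma sum_sub_sum_le_sum_mul_log_div {ι : Type*} [Fintype ι] {a b : ι → ℝ}
    (ha : ∀ i, 0 ≤ a i) (hb : ∀ i, 0 ≤ b i) (hab : ∀ i, a i ≠ 0 → b i ≠ 0) :
    ∑ i, a i - ∑ i, b i ≤ ∑ i, a i * log (a i / b i) := by
  rw [← sum_sub_distrib]
  exact sum_le_sum fun i _ => sub_le_mul_log_div (ha i) (hb i) (hab i)

lemma convexOn_mul_log_div (c : ℝ) : ConvexOn ℝ (Set.Ici 0) fun t => t * log (t / c) := by
  rcases eq_or_ne c 0 with rfl | hc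
  · simpa using convexOn_const (0 : ℝ) (convex_Ici (0 : ℝ))
  refine (convexOn_mul_log.add (((-log c) • LinearMap.id : ℝ →ₗ[ℝ] ℝ).convexOn
    (convex_Ici 0))).congr fun t (ht : 0 ≤ t) => ?_
  rcases ht.eq_or_lt with rfl | ht
  · simp
  simp [log_div ht.ne' hc]
  ring

lemma log_div_sub_sum_log_div {ι : Type*} [Fintype ι] {x a : ℝ} {c ν : ι → ℝ} (hx : x ≠ 0)
    (ha : a ≠ 0) (hc : ∀ i, c i ≠ 0) (hν : ∀ i, ν i ≠ 0) :
    log (x / (a * ∏ i, ν i)) - ∑ i, log (c i / (a * ν i)) = log (x / (a * ∏ i, c i / a)) := by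
  have hν' : ∏ i, ν i ≠ 0 := prod_ne_zero_iff.mpr fun i _ => hν i
  have hc' : ∏ i, c i / a ≠ 0 := prod_ne_zero_iff.mpr fun i _ => div_ne_zero (hc i) ha
  rw [← log_prod fun i _ => div_ne_zero (hc i) (mul_ne_zero ha (hν i)),
    ← log_div (by positivity) (prod_ne_zero_iff.mpr fun i _ =>
      div_ne_zero (hc i) (mul_ne_zero ha (hν i)))]
  congr 1
  simp_rw [mul_comm a, ← div_div, prod_div_distrib]
  field_simp

lemma sum_prod_mul_apply {ι β : Type*} [Fintype ι] [DecidableEq ι] [Fintype β]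
    (ν : ι → β → ℝ) (hν : ∀ j, ∑ b, ν j b = 1) (i : ι) (f : β → ℝ) :
    ∑ s : ι → β, (∏ j, ν j (s j)) * f (s i) = ∑ b, ν i b * f b := by
  have hfactor : ∀ s : ι → β, (∏ j, ν j (s j)) * f (s i)
      = ∏ j, ν j (s j) * (if j = i then f (s j) else 1) := by
    intro s
    rw [prod_mul_distrib, prod_ite_eq', if_pos (mem_univ i)]
  rw [sum_congr rfl fun s _ => hfactor s,
    ← Fintype.prod_sum fun j b => ν j b * if j = i then f b else 1]
  calc ∏ j, ∑ b, ν j b * (if j = i then f b else 1)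
      = ∏ j, if j = i then ∑ b, ν j b * f b else 1 :=
        prod_congr rfl fun j _ => by split_ifs <;> simp [hν]
    _ = ∑ b, ν i b * f b := by simp

lemma sum_mul_le_sum_abs {ι : Type*} [Fintype ι] {p : ι → ℝ} (hp0 : ∀ i, 0 ≤ p i)
    (hp1 : ∑ i, p i = 1) (c : ι → ℝ) : ∑ i, p i * c i ≤ ∑ i, |c i| := by
  refine sum_le_sum fun i _ => ?_
  have hp_le : p i ≤ 1 := hp1 ▸ single_le_sum (fun j _ => hp0 j) (mem_univ i)
  calc p i * c i ≤ p i * |c i| := mul_le_mul_of_nonneg_left (le_abs_self _) (hp0 i)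
    _ ≤ |c i| := mul_le_of_le_one_left (abs_nonneg _) hp_le

lemma csSup_le_csSup_chain {s t u : Set ℝ} (hs : s.Nonempty) (hu : BddAbove u) (hst : s ⊆ t)
    (htu : t ⊆ u) : sSup s ≤ sSup t ∧ sSup t ≤ sSup u :=
  ⟨csSup_le_csSup (hu.mono htu) hs hst, csSup_le_csSup hu (hs.mono hst) htu⟩

section MutualInformation

variable {α β : Type*} [Fintype α] [Fintype β]

lemma mutInfo_eq_of_marginals {p : α × β → ℝ} {pα : α → ℝ} {pβ : β → ℝ}
    (hα : ∀ a, ∑ b, p (a, b) = pα a) (hβ : ∀ b, ∑ a, p (a, b) = pβ b) :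
    mutInfo p = ∑ x, p x * log (p x / (pα x.1 * pβ x.2)) := by
  simp only [mutInfo, hα, hβ]

lemma mutInfo_mul_eq_zero {pα : α → ℝ} {pβ : β → ℝ} (hα : ∑ a, pα a = 1)
    (hβ : ∑ b, pβ b = 1) : mutInfo (fun x => pα x.1 * pβ x.2) = 0 := by
  rw [mutInfo_eq_of_marginals (pα := pα) (pβ := pβ) (fun a => by simp [← mul_sum, hβ])
    (fun b => by simp [← sum_mul, hα])]
  refine sum_eq_zero fun x _ => ?_
  rcases eq_or_ne (pα x.1 * pβ x.2) 0 with h | h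
  · simp [h]
  · simp [div_self h]

lemma mutInfo_mixture_le {κ : Type*} [Fintype κ] {w : κ → ℝ} (hw0 : ∀ k, 0 ≤ w k)
    (hw1 : ∑ k, w k = 1) {p : κ → α × β → ℝ} (hp0 : ∀ k x, 0 ≤ p k x) {pα : α → ℝ}
    {pβ : β → ℝ} (hα : ∀ k a, ∑ b, p k (a, b) = pα a) (hβ : ∀ k b, ∑ a, p k (a, b) = pβ b) :
    mutInfo (fun x => ∑ k, w k * p k x) ≤ ∑ k, w k * mutInfo (p k) := by
  have hmixα : ∀ a, ∑ b, ∑ k, w k * p k (a, b) = pα a := fun a => by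
    simp_rw [sum_comm (s := univ (α := β)), ← mul_sum, hα, ← sum_mul, hw1, one_mul]
  have hmixβ : ∀ b, ∑ a, ∑ k, w k * p k (a, b) = pβ b := fun b => by
    simp_rw [sum_comm (s := univ (α := α)), ← mul_sum, hβ, ← sum_mul, hw1, one_mul]
  have hcomp : ∀ k, mutInfo (p k) = ∑ x, p k x * log (p k x / (pα x.1 * pβ x.2)) :=
    fun k => mutInfo_eq_of_marginals (hα k) (hβ k)
  rw [mutInfo_eq_of_marginals hmixα hmixβ]
  simp only [hcomp, mul_sum]
  rw [sum_comm]
  refine sum_le_sum fun x _ => ?_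
  simpa [mul_assoc] using (convexOn_mul_log_div (pα x.1 * pβ x.2)).map_sum_le
    (fun k _ => hw0 k) hw1 (fun k _ => hp0 k x)

end MutualInformation

section Coordinates

variable {α β ι : Type*} [Fintype β] [Fintype ι] [DecidableEq ι] [DecidableEq β]

def coordJoint (q : α × (ι → β) → ℝ) (i : ι) (x : α × β) : ℝ :=
  ∑ s with s i = x.2, q (x.1, s)

lemma coordJoint_nonneg {q : α × (ι → β) → ℝ} (hq0 : ∀ x, 0 ≤ q x) (i : ι) (x : α × β) :
    0 ≤ coordJoint q i x :=
  sum_nonneg fun _ _ => hq0 _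

lemma le_coordJoint {q : α × (ι → β) → ℝ} (hq0 : ∀ x, 0 ≤ q x) (i : ι) (a : α) (s : ι → β) :
    q (a, s) ≤ coordJoint q i (a, s i) :=
  single_le_sum (f := fun s' => q (a, s')) (fun _ _ => hq0 _) (by simp)

noncomputable def timeShare (q : α × (ι → β) → ℝ) (x : α × β) : ℝ :=
  ∑ i, 1 / (Fintype.card ι : ℝ) * coordJoint q i x

lemma timeShare_nonneg {q : α × (ι → β) → ℝ} (hq0 : ∀ x, 0 ≤ q x) (x : α × β) :
    0 ≤ timeShare q x :=
  sum_nonneg fun i _ => mul_nonneg (by positivity) (coordJoint_nonneg hq0 i x)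

lemma sum_coordJoint_mul (q : α × (ι → β) → ℝ) (i : ι) (a : α) (g : β → ℝ) :
    ∑ b, coordJoint q i (a, b) * g b = ∑ s, q (a, s) * g (s i) := by
  rw [← sum_fiberwise (univ : Finset (ι → β)) fun s => s i]
  refine sum_congr rfl fun b _ => ?_
  rw [coordJoint, sum_mul]
  exact sum_congr rfl fun s hs => by rw [(mem_filter.mp hs).2]

lemma sum_coordJoint_left (q : α × (ι → β) → ℝ) (i : ι) (a : α) :
    ∑ b, coordJoint q i (a, b) = ∑ s, q (a, s) := by
  simpa using sum_coordJoint_mul q i a 1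

variable [Fintype α] {q : α × (ι → β) → ℝ}

lemma sum_coordJoint_right {ν : ι → β → ℝ} (hν : ∀ j, ∑ b, ν j b = 1)
    (hqν : ∀ s, ∑ a, q (a, s) = ∏ j, ν j (s j)) (i : ι) (b : β) :
    ∑ a, coordJoint q i (a, b) = ν i b := by
  simp only [coordJoint]
  rw [sum_comm]
  simp only [hqν, sum_filter]
  simpa [mul_boole] using sum_prod_mul_apply ν hν i fun z => if z = b then 1 else 0

theorem sum_mutInfo_coordJoint_le (hq0 : ∀ x, 0 ≤ q x) (hq1 : ∑ x, q x = 1)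
    {ν : ι → β → ℝ} (hν : ∀ j, ∑ b, ν j b = 1) (hqν : ∀ s, ∑ a, q (a, s) = ∏ j, ν j (s j)) :
    ∑ i, mutInfo (coordJoint q i) ≤ mutInfo q := by
  obtain ⟨qα, hqα⟩ : ∃ qα : α → ℝ, ∀ a, ∑ s, q (a, s) = qα a := ⟨_, fun _ => rfl⟩
  have hqα0 : ∀ a, 0 ≤ qα a := fun a => hqα a ▸ sum_nonneg fun _ _ => hq0 _
  -- `q` with the coordinates of `s` made conditionally independent given `a`
  set m : α × (ι → β) → ℝ := fun x => qα x.1 * ∏ i, coordJoint q i (x.1, x.2 i) / qα x.1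
  have hm0 : ∀ x, 0 ≤ m x := fun x => mul_nonneg (hqα0 _)
    (prod_nonneg fun i _ => div_nonneg (coordJoint_nonneg hq0 _ _) (hqα0 _))
  have hm1 : ∑ x, m x = 1 := by
    have hslice : ∀ a, ∑ s, m (a, s) = qα a := fun a => by
      simp only [m]
      rw [← mul_sum, ← Fintype.prod_sum fun i b => coordJoint q i (a, b) / qα a]
      simp only [← sum_div, sum_coordJoint_left, hqα]
      rcases eq_or_ne (qα a) 0 with h | h <;> simp [h]
    simp only [Fintype.sum_prod_type, hslice, ← hqα, ← Fintype.sum_prod_type (f := q), hq1]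
  have hsupport : ∀ a s, q (a, s) ≠ 0 →
      qα a ≠ 0 ∧ (∀ i, coordJoint q i (a, s i) ≠ 0) ∧ ∀ i, ν i (s i) ≠ 0 := by
    intro a s h
    have hpos : 0 < q (a, s) := (hq0 _).lt_of_ne' h
    have hν_prod : 0 < ∏ j, ν j (s j) :=
      hqν s ▸ hpos.trans_le (single_le_sum (f := fun a' => q (a', s)) (fun _ _ => hq0 _)
        (mem_univ a))
    exact ⟨(hpos.trans_le (hqα a ▸ single_le_sum (f := fun s' => q (a, s')) (fun _ _ => hq0 _)
        (mem_univ s))).ne',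
      fun i => (hpos.trans_le (le_coordJoint hq0 i a s)).ne',
      fun i => prod_ne_zero_iff.mp hν_prod.ne' i (mem_univ i)⟩
  have hcoord : ∀ i, mutInfo (coordJoint q i)
      = ∑ x, q x * log (coordJoint q i (x.1, x.2 i) / (qα x.1 * ν i (x.2 i))) := fun i => by
    rw [mutInfo_eq_of_marginals (pα := qα) (by simpa [hqα] using sum_coordJoint_left q i)
      (sum_coordJoint_right hν hqν i), Fintype.sum_prod_type, Fintype.sum_prod_type]
    exact sum_congr rfl fun a _ => sum_coordJoint_mul q i a _
  have hgibbs := sum_sub_sum_le_sum_mul_log_div hq0 hm0 fun x hx => by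
    obtain ⟨hqα_ne, hcj, -⟩ := hsupport x.1 x.2 hx
    exact mul_ne_zero hqα_ne (prod_ne_zero_iff.mpr fun i _ => div_ne_zero (hcj i) hqα_ne)
  rw [hq1, hm1, sub_self] at hgibbs
  rw [mutInfo_eq_of_marginals hqα hqν, ← sub_nonneg]
  simp only [hcoord]
  rw [sum_comm, ← sum_sub_distrib]
  refine hgibbs.trans_eq (sum_congr rfl fun x _ => ?_)
  rcases eq_or_ne (q x) 0 with h | h
  · simp [h]
  obtain ⟨hqα_ne, hcj, hν_ne⟩ := hsupport x.1 x.2 h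
  rw [← mul_sum, ← mul_sub, log_div_sub_sum_log_div h hqα_ne hcj hν_ne]

lemma sum_timeShare_right [Nonempty ι] {ν : β → ℝ} (hν : ∑ b, ν b = 1)
    (hqν : ∀ s, ∑ a, q (a, s) = ∏ j, ν (s j)) (b : β) : ∑ a, timeShare q (a, b) = ν b := by
  simp only [timeShare]
  rw [sum_comm]
  simp only [← mul_sum, sum_coordJoint_right (ν := fun _ => ν) (fun _ => hν) hqν]
  simp

lemma sum_timeShare [Nonempty ι] {ν : β → ℝ} (hν : ∑ b, ν b = 1)
    (hqν : ∀ s, ∑ a, q (a, s) = ∏ j, ν (s j)) : ∑ x, timeShare q x = 1 := by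
  rw [Fintype.sum_prod_type_right]
  simp [sum_timeShare_right hν hqν, hν]

lemma sum_timeShare_mul (c : α → β → ℝ) :
    ∑ x, timeShare q x * c x.1 x.2
      = ∑ x, q x * (1 / (Fintype.card ι : ℝ) * ∑ i, c x.1 (x.2 i)) := by
  simp only [timeShare, Fintype.sum_prod_type, sum_mul, mul_sum, mul_assoc]
  refine sum_congr rfl fun a _ => ?_
  rw [sum_comm, sum_comm (s := univ (α := ι → β))]
  refine sum_congr rfl fun i _ => ?_
  rw [← mul_sum, sum_coordJoint_mul, mul_sum]
  exact sum_congr rfl fun s _ => by ring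

lemma sum_timeShare_mul_sub [Nonempty ι] (L : α → ℝ) (c : α → β → ℝ) :
    ∑ x, timeShare q x * (L x.1 - c x.1 x.2)
      = ∑ x, q x * (L x.1 - 1 / (Fintype.card ι : ℝ) * ∑ i, c x.1 (x.2 i)) := by
  rw [sum_timeShare_mul fun a b => L a - c a b]
  refine sum_congr rfl fun x _ => ?_
  rw [sum_sub_distrib, sum_const, card_univ, nsmul_eq_mul]
  field_simp

lemma mutInfo_timeShare_le [Nonempty ι] (hq0 : ∀ x, 0 ≤ q x) (hq1 : ∑ x, q x = 1)
    {ν : β → ℝ} (hν : ∑ b, ν b = 1) (hqν : ∀ s, ∑ a, q (a, s) = ∏ j, ν (s j)) :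
    mutInfo (timeShare q) ≤ mutInfo q / Fintype.card ι := by
  calc mutInfo (timeShare q)
      ≤ ∑ i, 1 / (Fintype.card ι : ℝ) * mutInfo (coordJoint q i) :=
        mutInfo_mixture_le (fun _ => by positivity) (by simp) (fun i => coordJoint_nonneg hq0 i)
          (fun i => sum_coordJoint_left q i)
          (sum_coordJoint_right (ν := fun _ => ν) (fun _ => hν) hqν)
    _ = (∑ i, mutInfo (coordJoint q i)) / Fintype.card ι := by rw [← mul_sum, one_div_mul_eq_div]
    _ ≤ mutInfo q / Fintype.card ι := by
        gcongr
        exact sum_mutInfo_coordJoint_le hq0 hq1 (fun _ => hν) hqν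

end Coordinates

lemma vN_le_sum_mul {α β : Type*} [Fintype α] [Fintype β] {n : ℕ} {μ' : β → ℝ}
    (ℓt : α → β → ℝ) {q : α × (Fin n → β) → ℝ} (hq0 : ∀ x, 0 ≤ q x)
    (hqμ' : ∀ s, ∑ w, q (w, s) = ∏ i, μ' (s i)) :
    vN n μ' ℓt ≤ ∑ x, q x * (1 / (n : ℝ) * ∑ i, ℓt x.1 (x.2 i)) := by
  rw [vN, Fintype.sum_prod_type_right]
  refine sum_le_sum fun s _ => ?_
  rw [← hqμ', sum_mul]
  exact sum_le_sum fun w _ =>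
    mul_le_mul_of_nonneg_left (ciInf_le (Set.finite_range _).bddBelow w) (hq0 _)

theorem D1_le_D2tilde_le_D2_general (n : ℕ) (hn : 0 < n)
    (μ μ' : Z → ℝ)
    (hμ'0 : ∀ z, 0 ≤ μ' z) (hμ'1 : ∑ z, μ' z = 1)
    (ℓ ℓt : W → Z → ℝ) (r : ℝ) (hr : 0 ≤ r) :
    D1 n μ μ' ℓ r ≤ D2tilde n μ μ' ℓ ℓt (r / n) ∧
      D2tilde n μ μ' ℓ ℓt (r / n) ≤ D2 μ μ' ℓ (r / n) := by
  classical
  have : Nonempty (Fin n) := ⟨⟨0, hn⟩⟩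
  obtain ⟨w₀⟩ := ‹Nonempty W›
  have hμ'n : ∑ s : Fin n → Z, ∏ i, μ' (s i) = 1 := by
    rw [← Fintype.prod_sum]
    simp [hμ'1]
  unfold D1 D2tilde D2
  refine csSup_le_csSup_chain ?_ ?_ ?_ ?_
  · refine ⟨_, fun x => (if x.1 = w₀ then 1 else 0) * ∏ i, μ' (x.2 i), fun x => ?_, ?_,
      fun s => ?_, ?_, rfl⟩
    · exact mul_nonneg (by positivity) (prod_nonneg fun i _ => hμ'0 _)
    · simp [Fintype.sum_prod_type, hμ'n]
    · simp
    · refine (mutInfo_mul_eq_zero (pα := fun w => if w = w₀ then 1 else 0) ?_ hμ'n).trans_le hr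
      simp
  · refine ⟨∑ x : W × Z, |(∑ z, μ z * ℓ x.1 z) - ℓ x.1 x.2|, ?_⟩
    rintro _ ⟨p, hp0, hp1, -, -, rfl⟩
    exact sum_mul_le_sum_abs hp0 hp1 _
  · rintro _ ⟨q, hq0, hq1, hqμ', hqI, rfl⟩
    refine ⟨timeShare q, timeShare_nonneg hq0, sum_timeShare hμ'1 hqμ',
      sum_timeShare_right hμ'1 hqμ', ?_, ?_, ?_⟩
    · exact (mutInfo_timeShare_le hq0 hq1 hμ'1 hqμ').trans (by rw [Fintype.card_fin]; gcongr)
    · rw [sum_timeShare_mul ℓt, Fintype.card_fin]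
      exact vN_le_sum_mul ℓt hq0 hqμ'
    · rw [sum_timeShare_mul_sub (fun w => ∑ z, μ z * ℓ w z) ℓ, Fintype.card_fin]
  · rintro _ ⟨p, hp0, hp1, hpμ', hpI, -, rfl⟩
    exact ⟨p, hp0, hp1, hpμ', hpI, rfl⟩

/-- Auxiliary-loss improvement of the rate-distortion generalization bound:
D₁(r) ≤ D̃₂(r/n) ≤ D₂(r/n). -/
theorem D1_le_D2tilde_le_D2 [Nonempty Z] (n : ℕ) (hn : 0 < n)
    (μ μ' : Z → ℝ) (hμ0 : ∀ z, 0 ≤ μ z) (hμ1 : ∑ z, μ z = 1)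
    (hμ'0 : ∀ z, 0 ≤ μ' z) (hμ'1 : ∑ z, μ' z = 1)
    (ℓ ℓt : W → Z → ℝ) (r : ℝ) (hr : 0 ≤ r) :
    D1 n μ μ' ℓ r ≤ D2tilde n μ μ' ℓ ℓt (r / n) ∧
      D2tilde n μ μ' ℓ ℓt (r / n) ≤ D2 μ μ' ℓ (r / n) :=
  D1_le_D2tilde_le_D2_general n hn μ μ' hμ'0 hμ'1 ℓ ℓt r hr
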